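/- Consider a commutative diagram of group stacks with three horizontal fiber sequences H' → H → H'', G' → G → G'', K' → K → K'' and vertical morphisms H' → G' ← K', H → G ← K, H'' → G'' ← K''. Then for any point H''g''K'' ∈ H''\G''/K'', the (homotopy) fiber of the induced map of double quotient stacks H\G/K → H''\G''/K'' at H''g''K'' is canonically isomorphic to the double quotient stack H'\G'/(K')^{g''}, where (K')^{g''} is the conjugate of K' by a lift g ∈ G of g'' acting as an outer automorphism of G' (so that (K')^{g''} is well-defined up to conjugation, and the isomorphism is well-defined up to conjugation by elements of H'). Explicitly, the isomorphism descends from the map G' → F_{g''}, x ↦ H''xgK''. -/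

import Mathlib

/-!
# Statement 12 (fiber of a map of double quotient stacks)

Given a commutative diagram of groups with horizontal fiber sequences
`H' → H → H''`, `G' → G → G''`, `K' → K → K''` (vertical maps being inclusions of
subgroups), for any point `H''g''K''` of `H''\\G''/K''` the homotopy fiber of the induced
map of double quotient stacks `H\\G/K → H''\\G''/K''` at `H''g''K''` is canonically
equivalent to `H'\\G'/(K')^{g''}`, where `(K')^{g''}` is the conjugate of `K'` by a lift
`g ∈ G` of `g''`; the equivalence descends from `x ↦ H''·x·g·K''`.

Formalization (at the level of `1`-groupoids, i.e. for ordinary groups): the double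
quotient stack `H\\G/K` is modeled by the double-coset groupoid `DoubleCoset G H K`
(objects: elements of `G`; morphisms `a ⟶ b`: pairs `(h, k) ∈ H × K` with `h·a·k = b`).
The diagram is encoded by a surjection `π : G →* G''` (so `G' = ker π`, giving the fiber
sequence `G' → G → G''`) and subgroups `H, K ≤ G`, `H'' = π(H)`, `K'' = π(K)` (so the
rows `H ∩ G' → H → H''` and `K ∩ G' → K → K''` are fiber sequences).  The homotopy fiber
of the functor `Φ : DoubleCoset G H K ⥤ DoubleCoset G'' H'' K''` at the object `g''=π g`
is the comma groupoid `CostructuredArrow Φ ⟨π g⟩`.  The conclusion produces an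
equivalence from `H'\\G'/(K')^g` to this fiber whose underlying map on objects is
`x ↦ x·g`.
-/

open CategoryTheory

universe u

/-- The double quotient groupoid `H\G/K`. -/
structure DoubleCosetGpd (G : Type u) [Group G] (H K : Subgroup G) : Type u where
  elt : G

namespace DoubleCosetGpd

instance category (G : Type u) [Group G] (H K : Subgroup G) :
    Category (DoubleCosetGpd G H K) where
  Hom a b := {p : H × K // (p.1 : G) * a.elt * (p.2 : G) = b.elt}
  id a := ⟨(1, 1), by simp⟩
  comp {a b c} p q := ⟨(q.1.1 * p.1.1, p.1.2 * q.1.2), by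
    have h : ((q.1.1 * p.1.1 : H) : G) * a.elt * ((p.1.2 * q.1.2 : K) : G)
        = (q.1.1 : G) * ((p.1.1 : G) * a.elt * (p.1.2 : G)) * (q.1.2 : G) := by
      push_cast; group
    rw [h, p.2, q.2]⟩
  id_comp f := Subtype.ext (by simp)
  comp_id f := Subtype.ext (by simp)
  assoc f g h := Subtype.ext (by simp [mul_assoc])

variable {G : Type u} [Group G] {H K : Subgroup G}

instance : Groupoid (DoubleCosetGpd G H K) where
  inv {a b} p := ⟨(p.1.1⁻¹, p.1.2⁻¹), by
    obtain ⟨⟨h1, k1⟩, hp⟩ := p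
    dsimp only at hp ⊢
    rw [← hp]
    push_cast
    group⟩
  inv_comp {a b} p := Subtype.ext (by
    show ((p.1.1 * p.1.1⁻¹ : H), (p.1.2⁻¹ * p.1.2 : K)) = ((1 : H), (1 : K))
    simp)
  comp_inv {a b} p := Subtype.ext (by
    show ((p.1.1⁻¹ * p.1.1 : H), (p.1.2 * p.1.2⁻¹ : K)) = ((1 : H), (1 : K))
    simp)

/-- The functor of double-coset groupoids induced by a group homomorphism carrying the
subgroups into the subgroups. -/
def transfer {G G'' : Type u} [Group G] [Group G''] (π : G →* G'')
    (H K : Subgroup G) (H'' K'' : Subgroup G'')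
    (hH : ∀ x ∈ H, π x ∈ H'') (hK : ∀ x ∈ K, π x ∈ K'') :
    DoubleCosetGpd G H K ⥤ DoubleCosetGpd G'' H'' K'' where
  obj a := ⟨π a.elt⟩
  map {a b} p := ⟨(⟨π p.1.1, hH _ p.1.1.2⟩, ⟨π p.1.2, hK _ p.1.2.2⟩), by
    dsimp only
    calc π (p.1.1 : G) * π a.elt * π (p.1.2 : G)
        = π ((p.1.1 : G) * a.elt * (p.1.2 : G)) := by rw [map_mul, map_mul]
      _ = π b.elt := congrArg π p.2⟩
  map_id a := Subtype.ext (Prod.ext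
    (Subtype.ext (by show π ((1 : H) : G) = ((1 : H'') : G''); simp))
    (Subtype.ext (by show π ((1 : K) : G) = ((1 : K'') : G''); simp)))
  map_comp {a b c} p q := Subtype.ext (Prod.ext
    (Subtype.ext (by
      show π ((q.1.1 * p.1.1 : H) : G) = π (q.1.1 : G) * π (p.1.1 : G); simp))
    (Subtype.ext (by
      show π ((p.1.2 * q.1.2 : K) : G) = π (p.1.2 : G) * π (q.1.2 : G); simp)))

end DoubleCosetGpd

/-!
An object of the homotopy fiber over `π g` is an `a ∈ G` with `(h'', k'') ∈ H'' × K''` such that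
`h'' π(a) k'' = π g`. Lifting `h''` and `k''` to `H` and `K` moves it to an object `(x g, 1)` with
`x ∈ ker π`. A morphism `(x g, 1) ⟶ (y g, 1)` is a pair `(h, k) ∈ H × K` with `π h = π k = 1` and
`h x g k = y g`, which is exactly the morphism `(h, g k g⁻¹) : x ⟶ y` of `H'\G'/(K')^g`. Hence
`x ↦ (x g, 1)` is fully faithful and essentially surjective.
-/

@[simp] lemma MonoidHom.map_coe_ker {G M : Type*} [Group G] [MulOneClass M] (f : G →* M)
    (x : f.ker) : f x = 1 :=
  x.2

lemma Subgroup.mem_map_conj_iff {G : Type*} [Group G] {K : Subgroup G} {g k : G} :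
    k ∈ K.map (MulAut.conj g).toMonoidHom ↔ g⁻¹ * k * g ∈ K := by
  rw [Subgroup.mem_map_equiv, MulAut.conj_symm_apply]

namespace DoubleCosetGpd

section Hom

variable {G : Type u} [Group G] {H K : Subgroup G} {a b c : DoubleCosetGpd G H K}

def homMk (h : H) (k : K) (w : (h : G) * a.elt * k = b.elt) : a ⟶ b := ⟨(h, k), w⟩

def leftFactor (p : a ⟶ b) : G := p.1.1

def rightFactor (p : a ⟶ b) : G := p.1.2

lemma leftFactor_mem (p : a ⟶ b) : leftFactor p ∈ H := p.1.1.2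

lemma rightFactor_mem (p : a ⟶ b) : rightFactor p ∈ K := p.1.2.2

lemma leftFactor_mul_mul_rightFactor (p : a ⟶ b) :
    leftFactor p * a.elt * rightFactor p = b.elt :=
  p.2

@[ext] lemma hom_ext {p q : a ⟶ b} (h₁ : leftFactor p = leftFactor q)
    (h₂ : rightFactor p = rightFactor q) : p = q :=
  Subtype.ext (Prod.ext (Subtype.ext h₁) (Subtype.ext h₂))

@[simp] lemma leftFactor_homMk (h : H) (k : K) (w : (h : G) * a.elt * k = b.elt) :
    leftFactor (homMk h k w) = h := rfl

@[simp] lemma rightFactor_homMk (h : H) (k : K) (w : (h : G) * a.elt * k = b.elt) :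
    rightFactor (homMk h k w) = k := rfl

@[simp] lemma leftFactor_id : leftFactor (𝟙 a) = 1 := rfl

@[simp] lemma rightFactor_id : rightFactor (𝟙 a) = 1 := rfl

@[simp] lemma leftFactor_comp (p : a ⟶ b) (q : b ⟶ c) :
    leftFactor (p ≫ q) = leftFactor q * leftFactor p := rfl

@[simp] lemma rightFactor_comp (p : a ⟶ b) (q : b ⟶ c) :
    rightFactor (p ≫ q) = rightFactor p * rightFactor q := rfl

end Hom

section Transfer

variable {G G'' : Type u} [Group G] [Group G''] (π : G →* G'')
  (H K : Subgroup G) (H'' K'' : Subgroup G'')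
  (hH : ∀ x ∈ H, π x ∈ H'') (hK : ∀ x ∈ K, π x ∈ K'')

@[simp] lemma transfer_obj_elt (a : DoubleCosetGpd G H K) :
    ((transfer π H K H'' K'' hH hK).obj a).elt = π a.elt := rfl

@[simp] lemma leftFactor_transfer_map {a b : DoubleCosetGpd G H K} (p : a ⟶ b) :
    leftFactor ((transfer π H K H'' K'' hH hK).map p) = π (leftFactor p) := rfl

@[simp] lemma rightFactor_transfer_map {a b : DoubleCosetGpd G H K} (p : a ⟶ b) :
    rightFactor ((transfer π H K H'' K'' hH hK).map p) = π (rightFactor p) := rfl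

variable {π H K H'' K'' hH hK}

lemma leftFactor_w {c : DoubleCosetGpd G'' H'' K''}
    {X Y : CostructuredArrow (transfer π H K H'' K'' hH hK) c} (f : X ⟶ Y) :
    leftFactor Y.hom * π (leftFactor f.left) = leftFactor X.hom := by
  rw [← CostructuredArrow.w f, leftFactor_comp, leftFactor_transfer_map]

lemma rightFactor_w {c : DoubleCosetGpd G'' H'' K''}
    {X Y : CostructuredArrow (transfer π H K H'' K'' hH hK) c} (f : X ⟶ Y) :
    π (rightFactor f.left) * rightFactor Y.hom = rightFactor X.hom := by
  rw [← CostructuredArrow.w f, rightFactor_comp, rightFactor_transfer_map]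

end Transfer

section Fiber

variable {G G'' : Type u} [Group G] [Group G''] (π : G →* G'')
  (H K : Subgroup G) (H'' K'' : Subgroup G'')
  (hH : ∀ x ∈ H, π x ∈ H'') (hK : ∀ x ∈ K, π x ∈ K'') (g : G)

def fiberFunctor :
    DoubleCosetGpd π.ker (H.subgroupOf π.ker)
      ((K.map (MulAut.conj g).toMonoidHom).subgroupOf π.ker) ⥤
    CostructuredArrow (transfer π H K H'' K'' hH hK) (mk (π g)) where
  obj x := CostructuredArrow.mk (Y := mk ((x.elt : G) * g))
    (homMk 1 1 (by simp))
  map {x y} p := CostructuredArrow.homMk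
    (homMk ⟨(leftFactor p : π.ker), Subgroup.mem_subgroupOf.1 (leftFactor_mem p)⟩
      ⟨g⁻¹ * (rightFactor p : π.ker) * g,
        Subgroup.mem_map_conj_iff.1 (Subgroup.mem_subgroupOf.1 (rightFactor_mem p))⟩ (by
      have hp := congrArg Subtype.val (leftFactor_mul_mul_rightFactor p)
      push_cast at hp
      simp only [CostructuredArrow.mk_left, ← hp]
      group))
    (by ext <;> simp)
  -- `simp` must not rewrite `(MulAut.conj g).toMonoidHom` to a coercion inside the type of `x`.
  map_id x := by ext <;> simp [-MulEquiv.toMonoidHom_eq_coe]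
  map_comp p q := by ext <;> simp [-MulEquiv.toMonoidHom_eq_coe]; group

variable {π H K H'' K'' hH hK g}

instance : (fiberFunctor π H K H'' K'' hH hK g).Faithful where
  map_injective {x y} p q hpq := by
    have h₁ := congrArg (fun f => leftFactor f.left) hpq
    have h₂ := congrArg (fun f => rightFactor f.left) hpq
    simp only [fiberFunctor, CostructuredArrow.homMk_left, leftFactor_homMk,
      rightFactor_homMk, mul_left_inj, mul_right_inj] at h₁ h₂
    ext
    exacts [h₁, h₂]

instance : (fiberFunctor π H K H'' K'' hH hK g).Full where
  map_surjective {x y} f := by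
    have hh : π (leftFactor f.left) = 1 := by simpa [fiberFunctor] using leftFactor_w f
    have hk : π (rightFactor f.left) = 1 := by simpa [fiberFunctor] using rightFactor_w f
    have hf : leftFactor f.left * ((x.elt : G) * g) * rightFactor f.left = y.elt * g :=
      leftFactor_mul_mul_rightFactor f.left
    refine ⟨homMk ⟨⟨leftFactor f.left, hh⟩, leftFactor_mem f.left⟩
      ⟨⟨g * rightFactor f.left * g⁻¹, π.normal_ker.conj_mem _ hk g⟩,
        Subgroup.mem_subgroupOf.2 (Subgroup.mem_map_of_mem _ (rightFactor_mem f.left))⟩ ?_, ?_⟩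
    · apply Subtype.ext
      calc (leftFactor f.left : G) * x.elt * (g * rightFactor f.left * g⁻¹)
          = leftFactor f.left * (x.elt * g) * rightFactor f.left * g⁻¹ := by group
        _ = y.elt := by rw [hf]; group
    · ext <;> simp [fiberFunctor, -MulEquiv.toMonoidHom_eq_coe]
      group

lemma fiberFunctor_essSurj (hH' : H'' ≤ H.map π) (hK' : K'' ≤ K.map π) :
    (fiberFunctor π H K H'' K'' hH hK g).EssSurj where
  mem_essImage Y := by
    obtain ⟨h, hh, hπh⟩ := hH' (leftFactor_mem Y.hom)
    obtain ⟨k, hk, hπk⟩ := hK' (rightFactor_mem Y.hom)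
    have hY : π (h * Y.left.elt * k) = π g := by
      simpa [hπh, hπk] using leftFactor_mul_mul_rightFactor Y.hom
    refine ⟨⟨⟨h * Y.left.elt * k * g⁻¹, by simp [hY]⟩⟩, ⟨CostructuredArrow.isoMk
      (asIso (homMk ⟨h⁻¹, inv_mem hh⟩ ⟨k⁻¹, inv_mem hk⟩ ?_)) ?_⟩⟩
    · show h⁻¹ * (h * Y.left.elt * k * g⁻¹ * g) * k⁻¹ = Y.left.elt
      group
    ext
    · show leftFactor Y.hom * π h⁻¹ = 1
      rw [map_inv, hπh, mul_inv_cancel]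
    · show π k⁻¹ * rightFactor Y.hom = 1
      rw [map_inv, hπk, inv_mul_cancel]

lemma fiberFunctor_isEquivalence (hH' : H'' ≤ H.map π) (hK' : K'' ≤ K.map π) :
    (fiberFunctor π H K H'' K'' hH hK g).IsEquivalence where
  essSurj := fiberFunctor_essSurj hH' hK'

end Fiber

end DoubleCosetGpd

theorem fiber_of_map_of_double_quotients_general
    (G G'' : Type u) [Group G] [Group G'']
    -- the fiber sequence `G' → G → G''`, with `G' = ker π`
    (π : G →* G'')
    -- subgroups `H, K ≤ G` and the fiber sequences `H' → H → H''`, `K' → K → K''`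
    -- (so `H'' = π(H)`, `K'' = π(K)`, `H' = H ∩ G'`, `K' = K ∩ G'`)
    (H K : Subgroup G) (H'' K'' : Subgroup G'')
    (hH : H.map π = H'') (hK : K.map π = K'')
    -- a lift `g ∈ G` of the point `g'' = π g ∈ H''\G''/K''`
    (g : G) :
    ∃ E : DoubleCosetGpd π.ker (H.subgroupOf π.ker)
            ((K.map (MulAut.conj g).toMonoidHom).subgroupOf π.ker) ≌
          CostructuredArrow
            (DoubleCosetGpd.transfer π H K H'' K''
              (fun x hx => hH ▸ Subgroup.mem_map_of_mem π hx)
              (fun x hx => hK ▸ Subgroup.mem_map_of_mem π hx))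
            (DoubleCosetGpd.mk (π g)),
      -- the equivalence descends from the map `G' → F_{g''}`, `x ↦ H''·x·g·K''`
      ∀ x, ((E.functor.obj x).left).elt = (x.elt : G) * g := by
  have := DoubleCosetGpd.fiberFunctor_isEquivalence (g := g)
    (hH := fun _ hx => hH.le (Subgroup.mem_map_of_mem π hx))
    (hK := fun _ hx => hK.le (Subgroup.mem_map_of_mem π hx)) hH.ge hK.ge
  exact ⟨(DoubleCosetGpd.fiberFunctor π H K H'' K'' _ _ g).asEquivalence, fun _ => rfl⟩

theorem fiber_of_map_of_double_quotients
    (G G'' : Type u) [Group G] [Group G'']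
    -- the fiber sequence `G' → G → G''`, with `G' = ker π`
    (π : G →* G'') (hπ : Function.Surjective π)
    -- subgroups `H, K ≤ G` and the fiber sequences `H' → H → H''`, `K' → K → K''`
    -- (so `H'' = π(H)`, `K'' = π(K)`, `H' = H ∩ G'`, `K' = K ∩ G'`)
    (H K : Subgroup G) (H'' K'' : Subgroup G'')
    (hH : H.map π = H'') (hK : K.map π = K'')
    -- a lift `g ∈ G` of the point `g'' = π g ∈ H''\G''/K''`
    (g : G) :
    ∃ E : DoubleCosetGpd π.ker (H.subgroupOf π.ker)
            ((K.map (MulAut.conj g).toMonoidHom).subgroupOf π.ker) ≌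
          CostructuredArrow
            (DoubleCosetGpd.transfer π H K H'' K''
              (fun x hx => hH ▸ Subgroup.mem_map_of_mem π hx)
              (fun x hx => hK ▸ Subgroup.mem_map_of_mem π hx))
            (DoubleCosetGpd.mk (π g)),
      -- the equivalence descends from the map `G' → F_{g''}`, `x ↦ H''·x·g·K''`
      ∀ x, ((E.functor.obj x).left).elt = (x.elt : G) * g :=
  fiber_of_map_of_double_quotients_general G G'' π H K H'' K'' hH hK g
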